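/- Let Ω₁, Ω₂ be compact. If the entropically regularized Kantorovich problem (minimizing ∫ c dπ + γ ∫ π(log π − 1) over probability measures π on Ω₁×Ω₂ with marginals μ and ν) admits a minimizer π̄, then π̄ has a Lebesgue density in L log L(Ω₁×Ω₂), and consequently μ ∈ L log L(Ω₁) and ν ∈ L log L(Ω₂). -/

import Mathlib

open MeasureTheory ENNReal

/-- `log⁺(x) = max (log x) 0`. -/
noncomputable def logPlus (x : ℝ) : ℝ := max (Real.log x) 0

open Classical in
/-- The entropically regularized transport objective of a measure `π`:
`∫ c dπ + γ ∫ π (log π - 1) dx` if `π` is absolutely continuous w.r.t. Lebesgue measure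
(with `π` also denoting the Lebesgue density), and `+∞` otherwise.  The entropy integral
is split into positive and negative parts in the extended reals. -/
noncomputable def regObjective {E : Type*} [MeasureSpace E] (γ : ℝ) (c : E → ℝ)
    (π : Measure E) : EReal :=
  if π ≪ (volume : Measure E) then
    ((∫⁻ p, ENNReal.ofReal (c p) ∂π : ℝ≥0∞) : EReal) +
      (γ : EReal) *
        (((∫⁻ p, ENNReal.ofReal ((π.rnDeriv volume p).toReal *
            (Real.log (π.rnDeriv volume p).toReal - 1)) : ℝ≥0∞) : EReal) -
         ((∫⁻ p, ENNReal.ofReal (-((π.rnDeriv volume p).toReal *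
            (Real.log (π.rnDeriv volume p).toReal - 1))) : ℝ≥0∞) : EReal))
  else ⊤

/-!
A minimizer has finite objective value, so it is absolutely continuous and, since `γ > 0` and
the negative part `-π (log π - 1) ≤ 1` of the entropy integrates to at most the volume of the
compact set `Ω₁ × Ω₂`, its density `π` has `∫ π (log π - 1) < ∞`; as `π log⁺ π ≤ π (log π - 1)⁺ + π`,
the density lies in `L log L`. A marginal density `f(x) = ∫ π(x, y) dy`, with `π(x, ·)` supported
in the set `Ω₂` of finite volume, obeys `f log⁺ f ≤ ∫ π(x, y) log⁺ π(x, y) dy + |Ω₂| f` by the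
Young-type inequality `s log⁺ t ≤ s log⁺ s + t` applied with `s = π(x, y)`, `t = f(x)`.
-/

lemma logPlus_nonneg (x : ℝ) : 0 ≤ logPlus x := le_max_right _ _

lemma measurable_logPlus : Measurable logPlus := Real.measurable_log.max measurable_const

lemma logPlus_of_le_one {x : ℝ} (hx : 0 ≤ x) (h : x ≤ 1) : logPlus x = 0 :=
  max_eq_right (Real.log_nonpos hx h)

lemma logPlus_of_one_lt {x : ℝ} (h : 1 < x) : logPlus x = Real.log x :=
  max_eq_left (Real.log_nonneg h.le)

lemma mul_logPlus_le_mul_logPlus_add {s t : ℝ} (hs : 0 ≤ s) (ht : 0 ≤ t) :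
    s * logPlus t ≤ s * logPlus s + t := by
  have hss : 0 ≤ s * logPlus s := mul_nonneg hs (logPlus_nonneg s)
  rcases le_or_gt t 1 with ht1 | ht1
  · rw [logPlus_of_le_one ht ht1, mul_zero]
    linarith
  rw [logPlus_of_one_lt ht1]
  have hlogt : Real.log t ≤ t - 1 := Real.log_le_sub_one_of_pos (by linarith)
  rcases le_or_gt s 1 with hs1 | hs1
  · nlinarith [Real.log_nonneg ht1.le]
  rw [logPlus_of_one_lt hs1]
  have hs0 : 0 < s := by linarith
  have hquot : Real.log t - Real.log s ≤ t / s - 1 := by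
    rw [← Real.log_div (by linarith) hs0.ne']
    exact Real.log_le_sub_one_of_pos (by positivity)
  have : s * (t / s) = t := by field_simp
  nlinarith

lemma neg_mul_log_sub_one_le_one {x : ℝ} (hx : 0 ≤ x) : -(x * (Real.log x - 1)) ≤ 1 := by
  rcases hx.eq_or_lt with rfl | hx
  · simp
  have hinv : Real.log x⁻¹ ≤ x⁻¹ - 1 := Real.log_le_sub_one_of_pos (inv_pos.2 hx)
  rw [Real.log_inv] at hinv
  have : x * x⁻¹ = 1 := mul_inv_cancel₀ hx.ne'
  nlinarith

open MeasureTheory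

/-- `a log⁺ a`, which by the `toReal` convention is `0` (not `∞`) at `a = ∞`. -/
noncomputable def mulLogPlus (a : ℝ≥0∞) : ℝ≥0∞ := ENNReal.ofReal (a.toReal * logPlus a.toReal)

lemma measurable_mulLogPlus : Measurable mulLogPlus :=
  (ENNReal.measurable_toReal.mul (measurable_logPlus.comp ENNReal.measurable_toReal)).ennreal_ofReal

lemma Measurable.mulLogPlus {α : Type*} [MeasurableSpace α] {f : α → ℝ≥0∞} (hf : Measurable f) :
    Measurable fun x ↦ mulLogPlus (f x) :=
  measurable_mulLogPlus.comp hf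

lemma mulLogPlus_le (a : ℝ≥0∞) :
    mulLogPlus a ≤ ENNReal.ofReal (a.toReal * (Real.log a.toReal - 1)) + a := by
  rcases le_or_gt a.toReal 1 with ha | ha
  · simp [mulLogPlus, logPlus_of_le_one ENNReal.toReal_nonneg ha]
  rw [mulLogPlus, logPlus_of_one_lt ha, show a.toReal * Real.log a.toReal =
    a.toReal * (Real.log a.toReal - 1) + a.toReal by ring]
  exact ENNReal.ofReal_add_le.trans (by gcongr; exact ENNReal.ofReal_toReal_le)

def HasLLogLDensity {α : Type*} [MeasurableSpace α] (μ ρ : Measure α) : Prop :=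
  μ ≪ ρ ∧ ∫⁻ x, mulLogPlus (μ.rnDeriv ρ x) ∂ρ < ⊤

section

variable {α β : Type*} [MeasurableSpace α] [MeasurableSpace β]

lemma ae_rnDeriv_ne_zero_imp_mem {π ρ : Measure α} {s : Set α} (hs : MeasurableSet s)
    (h : ∀ᵐ x ∂π, x ∈ s) : ∀ᵐ x ∂ρ, π.rnDeriv ρ x ≠ 0 → x ∈ s := by
  have hzero : ∫⁻ x in sᶜ, π.rnDeriv ρ x ∂ρ = 0 :=
    le_antisymm ((Measure.setLIntegral_rnDeriv_le _).trans_eq (mem_ae_iff.1 h)) bot_le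
  have hae := (ae_restrict_iff' hs.compl).1
    ((lintegral_eq_zero_iff (Measure.measurable_rnDeriv π ρ)).1 hzero)
  filter_upwards [hae] with x hx hne
  by_contra hxs
  exact hne (hx hxs)

lemma lintegral_ofReal_neg_mul_log_sub_one_le {π ρ : Measure α} {s : Set α}
    (hs : MeasurableSet s) (h : ∀ᵐ x ∂π, x ∈ s) :
    ∫⁻ x, ENNReal.ofReal (-((π.rnDeriv ρ x).toReal * (Real.log (π.rnDeriv ρ x).toReal - 1))) ∂ρ
      ≤ ρ s := by
  rw [← lintegral_indicator_one hs]
  refine lintegral_mono_ae ?_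
  filter_upwards [ae_rnDeriv_ne_zero_imp_mem hs h] with x hx
  rcases eq_or_ne (π.rnDeriv ρ x) 0 with h0 | h0
  · simp [h0]
  rw [Set.indicator_of_mem (hx h0), Pi.one_apply, ← ENNReal.ofReal_one]
  exact ENNReal.ofReal_le_ofReal (neg_mul_log_sub_one_le_one ENNReal.toReal_nonneg)

lemma HasLLogLDensity.of_lintegral_ofReal_mul_log_sub_one_ne_top {π ρ : Measure α}
    [IsFiniteMeasure π] (hac : π ≪ ρ)
    (h : ∫⁻ x, ENNReal.ofReal ((π.rnDeriv ρ x).toReal * (Real.log (π.rnDeriv ρ x).toReal - 1)) ∂ρ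
      ≠ ⊤) :
    HasLLogLDensity π ρ := by
  refine ⟨hac, ?_⟩
  calc ∫⁻ x, mulLogPlus (π.rnDeriv ρ x) ∂ρ
      ≤ ∫⁻ x, (ENNReal.ofReal ((π.rnDeriv ρ x).toReal * (Real.log (π.rnDeriv ρ x).toReal - 1))
          + π.rnDeriv ρ x) ∂ρ := lintegral_mono fun x ↦ mulLogPlus_le _
    _ ≤ ∫⁻ x, ENNReal.ofReal ((π.rnDeriv ρ x).toReal * (Real.log (π.rnDeriv ρ x).toReal - 1)) ∂ρ
          + π Set.univ := by
        rw [lintegral_add_right _ (Measure.measurable_rnDeriv π ρ)]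
        gcongr
        exact Measure.lintegral_rnDeriv_le
    _ < ⊤ := ENNReal.add_lt_top.2 ⟨h.lt_top, measure_lt_top π _⟩

lemma HasLLogLDensity.map {π ρ : Measure α} [SigmaFinite π] [SigmaFinite ρ] {f : α → β}
    (hf : MeasurableEmbedding f) (hπ : HasLLogLDensity π ρ) :
    HasLLogLDensity (π.map f) (ρ.map f) := by
  refine ⟨hπ.1.map hf.measurable, ?_⟩
  rw [hf.lintegral_map]
  calc ∫⁻ x, mulLogPlus ((π.map f).rnDeriv (ρ.map f) (f x)) ∂ρ
      = ∫⁻ x, mulLogPlus (π.rnDeriv ρ x) ∂ρ :=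
        lintegral_congr_ae ((hf.rnDeriv_map π ρ).fun_comp mulLogPlus)
    _ < ⊤ := hπ.2

lemma map_fst_withDensity_prod (ρ₁ : Measure α) (ρ₂ : Measure β) [SFinite ρ₁] [SFinite ρ₂]
    {g : α × β → ℝ≥0∞} (hg : Measurable g) :
    ((ρ₁.prod ρ₂).withDensity g).map Prod.fst = ρ₁.withDensity fun x ↦ ∫⁻ y, g (x, y) ∂ρ₂ := by
  ext s hs
  rw [Measure.map_apply measurable_fst hs, withDensity_apply _ (measurable_fst hs),
    withDensity_apply _ hs, ← Set.prod_univ, ← Measure.restrict_prod_eq_prod_univ,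
    lintegral_prod _ hg.aemeasurable]

lemma mulLogPlus_lintegral_le {ρ : Measure β} {h : β → ℝ≥0∞} (hh : Measurable h)
    {K : Set β} (hK : MeasurableSet K) (hsupp : ∀ᵐ y ∂ρ, h y ≠ 0 → y ∈ K)
    (hfin : ∀ᵐ y ∂ρ, h y ≠ ⊤) :
    mulLogPlus (∫⁻ y, h y ∂ρ) ≤ ∫⁻ y, mulLogPlus (h y) ∂ρ + ρ K * ∫⁻ y, h y ∂ρ := by
  set F := ∫⁻ y, h y ∂ρ
  set L := ENNReal.ofReal (logPlus F.toReal)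
  have hpointwise : ∀ᵐ y ∂ρ, L * h y ≤ mulLogPlus (h y) + K.indicator (fun _ ↦ F) y := by
    filter_upwards [hsupp, hfin] with y hyK hy
    rcases eq_or_ne (h y) 0 with h0 | h0
    · simp [h0]
    rw [Set.indicator_of_mem (hyK h0), mulLogPlus, ← ENNReal.ofReal_toReal hy,
      ← ENNReal.ofReal_mul (logPlus_nonneg _), ENNReal.toReal_ofReal ENNReal.toReal_nonneg]
    calc ENNReal.ofReal (logPlus F.toReal * (h y).toReal)
        ≤ ENNReal.ofReal ((h y).toReal * logPlus (h y).toReal + F.toReal) := by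
          rw [mul_comm]
          exact ENNReal.ofReal_le_ofReal
            (mul_logPlus_le_mul_logPlus_add ENNReal.toReal_nonneg ENNReal.toReal_nonneg)
      _ ≤ ENNReal.ofReal ((h y).toReal * logPlus (h y).toReal) + F :=
        ENNReal.ofReal_add_le.trans (by gcongr; exact ENNReal.ofReal_toReal_le)
  calc mulLogPlus F = ENNReal.ofReal F.toReal * L := by
        rw [mulLogPlus, ENNReal.ofReal_mul ENNReal.toReal_nonneg]
    _ ≤ L * F := by rw [mul_comm]; gcongr; exact ENNReal.ofReal_toReal_le
    _ = ∫⁻ y, L * h y ∂ρ := (lintegral_const_mul L hh).symm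
    _ ≤ ∫⁻ y, (mulLogPlus (h y) + K.indicator (fun _ ↦ F) y) ∂ρ := lintegral_mono_ae hpointwise
    _ = ∫⁻ y, mulLogPlus (h y) ∂ρ + ρ K * F := by
        rw [lintegral_add_left hh.mulLogPlus, lintegral_indicator hK,
          setLIntegral_const, mul_comm]

theorem HasLLogLDensity.map_fst {ρ₁ : Measure α} {ρ₂ : Measure β} [SigmaFinite ρ₁]
    [SigmaFinite ρ₂] {π : Measure (α × β)} [IsFiniteMeasure π] {K : Set β}
    (hK : MeasurableSet K) (hKfin : ρ₂ K ≠ ⊤) (hπ : HasLLogLDensity π (ρ₁.prod ρ₂))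
    (hsupp : ∀ᵐ p ∂π, p.2 ∈ K) :
    HasLLogLDensity (π.map Prod.fst) ρ₁ := by
  set g := π.rnDeriv (ρ₁.prod ρ₂)
  have hg : Measurable g := Measure.measurable_rnDeriv _ _
  set f : α → ℝ≥0∞ := fun x ↦ ∫⁻ y, g (x, y) ∂ρ₂
  have hmap : π.map Prod.fst = ρ₁.withDensity f := by
    conv_lhs => rw [← Measure.withDensity_rnDeriv_eq π _ hπ.1]
    exact map_fst_withDensity_prod ρ₁ ρ₂ hg
  refine ⟨hmap ▸ withDensity_absolutelyContinuous _ _, ?_⟩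
  have hfibre : ∀ᵐ x ∂ρ₁,
      mulLogPlus (f x) ≤ ∫⁻ y, mulLogPlus (g (x, y)) ∂ρ₂ + ρ₂ K * f x := by
    have hsupp' := ae_rnDeriv_ne_zero_imp_mem (ρ := ρ₁.prod ρ₂) (measurable_snd hK) hsupp
    filter_upwards [Measure.ae_ae_of_ae_prod hsupp',
      Measure.ae_ae_of_ae_prod (Measure.rnDeriv_ne_top π (ρ₁.prod ρ₂))] with x hxK hxfin
    exact mulLogPlus_lintegral_le (hg.comp measurable_prodMk_left) hK hxK hxfin
  calc ∫⁻ x, mulLogPlus ((π.map Prod.fst).rnDeriv ρ₁ x) ∂ρ₁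
      = ∫⁻ x, mulLogPlus (f x) ∂ρ₁ := by
        rw [hmap]
        exact lintegral_congr_ae ((Measure.rnDeriv_withDensity ρ₁
          hg.lintegral_prod_right').fun_comp mulLogPlus)
    _ ≤ ∫⁻ x, (∫⁻ y, mulLogPlus (g (x, y)) ∂ρ₂ + ρ₂ K * f x) ∂ρ₁ := lintegral_mono_ae hfibre
    _ = ∫⁻ p, mulLogPlus (g p) ∂(ρ₁.prod ρ₂) + ρ₂ K * ∫⁻ p, g p ∂(ρ₁.prod ρ₂) := by
        rw [lintegral_add_left hg.mulLogPlus.lintegral_prod_right',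
          lintegral_const_mul _ hg.lintegral_prod_right',
          lintegral_prod _ hg.mulLogPlus.aemeasurable,
          lintegral_prod _ hg.aemeasurable]
    _ ≤ ∫⁻ p, mulLogPlus (g p) ∂(ρ₁.prod ρ₂) + ρ₂ K * π Set.univ := by
        gcongr
        exact Measure.lintegral_rnDeriv_le
    _ < ⊤ := ENNReal.add_lt_top.2
        ⟨hπ.2, ENNReal.mul_lt_top hKfin.lt_top (measure_lt_top π _)⟩

theorem HasLLogLDensity.map_snd {ρ₁ : Measure α} {ρ₂ : Measure β} [SigmaFinite ρ₁]
    [SigmaFinite ρ₂] {π : Measure (α × β)} [IsFiniteMeasure π] {K : Set α}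
    (hK : MeasurableSet K) (hKfin : ρ₁ K ≠ ⊤) (hπ : HasLLogLDensity π (ρ₁.prod ρ₂))
    (hsupp : ∀ᵐ p ∂π, p.1 ∈ K) :
    HasLLogLDensity (π.map Prod.snd) ρ₂ := by
  have hswap : HasLLogLDensity (π.map Prod.swap) (ρ₂.prod ρ₁) := by
    rw [← Measure.prod_swap]
    exact hπ.map MeasurableEquiv.prodComm.measurableEmbedding
  have := hswap.map_fst hK hKfin ((ae_map_iff measurable_swap.aemeasurable
    (measurable_snd hK)).2 hsupp)
  rwa [Measure.map_map measurable_fst measurable_swap] at this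

end

lemma absolutelyContinuous_of_regObjective_ne_top {E : Type*} [MeasureSpace E] {γ : ℝ}
    {c : E → ℝ} {π : Measure E} (h : regObjective γ c π ≠ ⊤) : π ≪ volume := by
  by_contra hac
  exact h (by rw [regObjective, if_neg hac])

/-- The cost term is an `ℝ≥0∞`-integral, so it cannot cancel `γ · ∞ = ∞`. -/
lemma lintegral_ofReal_mul_log_sub_one_ne_top_of_regObjective_ne_top {E : Type*}
    [MeasureSpace E] {γ : ℝ} (hγ : 0 < γ) {c : E → ℝ} {π : Measure E}
    (hneg : ∫⁻ p, ENNReal.ofReal (-((π.rnDeriv volume p).toReal *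
      (Real.log (π.rnDeriv volume p).toReal - 1))) ≠ ⊤)
    (h : regObjective γ c π ≠ ⊤) :
    ∫⁻ p, ENNReal.ofReal ((π.rnDeriv volume p).toReal *
      (Real.log (π.rnDeriv volume p).toReal - 1)) ≠ ⊤ := by
  intro hpos
  apply h
  lift ∫⁻ p, ENNReal.ofReal (-((π.rnDeriv volume p).toReal *
    (Real.log (π.rnDeriv volume p).toReal - 1))) to NNReal using hneg with b hb
  rw [regObjective, if_pos (absolutelyContinuous_of_regObjective_ne_top h), hpos, ← hb,
    EReal.coe_ennreal_top, EReal.coe_nnreal_eq_coe_real, EReal.top_sub_coe,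
    EReal.mul_top_of_pos (mod_cast hγ), EReal.add_top_of_ne_bot (EReal.coe_ennreal_ne_bot _)]

theorem minimizer_density_in_LlogL_general (n₁ n₂ : ℕ)
    (Ω₁ : Set (Fin n₁ → ℝ)) (Ω₂ : Set (Fin n₂ → ℝ))
    (hΩ₁ : IsCompact Ω₁) (hΩ₂ : IsCompact Ω₂)
    (c : (Fin n₁ → ℝ) × (Fin n₂ → ℝ) → ℝ)
    (γ : ℝ) (hγ : 0 < γ)
    (μ : Measure (Fin n₁ → ℝ)) (ν : Measure (Fin n₂ → ℝ))
    (pibar : Measure ((Fin n₁ → ℝ) × (Fin n₂ → ℝ)))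
    (hpibarprob : IsProbabilityMeasure pibar) (hpibarsupp : pibar ((Ω₁ ×ˢ Ω₂)ᶜ) = 0)
    (hpibarm₁ : pibar.map Prod.fst = μ) (hpibarm₂ : pibar.map Prod.snd = ν)
    (hfin : regObjective γ c pibar ≠ ⊤) :
    (pibar ≪ (volume : Measure ((Fin n₁ → ℝ) × (Fin n₂ → ℝ))) ∧
      ∫⁻ p, ENNReal.ofReal ((pibar.rnDeriv volume p).toReal *
        logPlus (pibar.rnDeriv volume p).toReal) < ⊤) ∧
    (μ ≪ (volume : Measure (Fin n₁ → ℝ)) ∧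
      ∫⁻ x, ENNReal.ofReal ((μ.rnDeriv volume x).toReal *
        logPlus (μ.rnDeriv volume x).toReal) < ⊤) ∧
    (ν ≪ (volume : Measure (Fin n₂ → ℝ)) ∧
      ∫⁻ x, ENNReal.ofReal ((ν.rnDeriv volume x).toReal *
        logPlus (ν.rnDeriv volume x).toReal) < ⊤) := by
  have hΩ : MeasurableSet (Ω₁ ×ˢ Ω₂) := hΩ₁.measurableSet.prod hΩ₂.measurableSet
  have hsupp : ∀ᵐ p ∂pibar, p ∈ Ω₁ ×ˢ Ω₂ := mem_ae_iff.2 hpibarsupp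
  have hac := absolutelyContinuous_of_regObjective_ne_top hfin
  have hneg := (lintegral_ofReal_neg_mul_log_sub_one_le (ρ := volume) hΩ hsupp).trans_lt
    (hΩ₁.prod hΩ₂).measure_lt_top
  have hpibar : HasLLogLDensity pibar volume :=
    .of_lintegral_ofReal_mul_log_sub_one_ne_top hac
      (lintegral_ofReal_mul_log_sub_one_ne_top_of_regObjective_ne_top hγ hneg.ne hfin)
  refine ⟨hpibar, ?_, ?_⟩
  · rw [← hpibarm₁]
    exact hpibar.map_fst hΩ₂.measurableSet hΩ₂.measure_lt_top.ne (hsupp.mono fun _ hp ↦ hp.2)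
  · rw [← hpibarm₂]
    exact hpibar.map_snd hΩ₁.measurableSet hΩ₁.measure_lt_top.ne (hsupp.mono fun _ hp ↦ hp.1)

/-- If the entropically regularized Kantorovich problem admits a minimizer `pibar` (a feasible
probability measure of finite objective value minimizing the objective among all feasible
measures), then `pibar` has a Lebesgue density in `L log L(Ω₁ × Ω₂)`, and consequently the
marginals `μ` and `ν` have Lebesgue densities in `L log L(Ω₁)` and `L log L(Ω₂)`. -/
theorem minimizer_density_in_LlogL (n₁ n₂ : ℕ)
    (Ω₁ : Set (Fin n₁ → ℝ)) (Ω₂ : Set (Fin n₂ → ℝ))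
    (hΩ₁ : IsCompact Ω₁) (hΩ₂ : IsCompact Ω₂)
    (c : (Fin n₁ → ℝ) × (Fin n₂ → ℝ) → ℝ) (hc : Continuous c) (hc0 : ∀ p, 0 ≤ c p)
    (γ : ℝ) (hγ : 0 < γ)
    (μ : Measure (Fin n₁ → ℝ)) (ν : Measure (Fin n₂ → ℝ))
    (hμ : IsProbabilityMeasure μ) (hν : IsProbabilityMeasure ν)
    (pibar : Measure ((Fin n₁ → ℝ) × (Fin n₂ → ℝ)))
    (hpibarprob : IsProbabilityMeasure pibar) (hpibarsupp : pibar ((Ω₁ ×ˢ Ω₂)ᶜ) = 0)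
    (hpibarm₁ : pibar.map Prod.fst = μ) (hpibarm₂ : pibar.map Prod.snd = ν)
    (hfin : regObjective γ c pibar ≠ ⊤)
    (hmin : ∀ π : Measure ((Fin n₁ → ℝ) × (Fin n₂ → ℝ)), IsProbabilityMeasure π →
      π ((Ω₁ ×ˢ Ω₂)ᶜ) = 0 → π.map Prod.fst = μ → π.map Prod.snd = ν →
      regObjective γ c pibar ≤ regObjective γ c π) :
    (pibar ≪ (volume : Measure ((Fin n₁ → ℝ) × (Fin n₂ → ℝ))) ∧
      ∫⁻ p, ENNReal.ofReal ((pibar.rnDeriv volume p).toReal *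
        logPlus (pibar.rnDeriv volume p).toReal) < ⊤) ∧
    (μ ≪ (volume : Measure (Fin n₁ → ℝ)) ∧
      ∫⁻ x, ENNReal.ofReal ((μ.rnDeriv volume x).toReal *
        logPlus (μ.rnDeriv volume x).toReal) < ⊤) ∧
    (ν ≪ (volume : Measure (Fin n₂ → ℝ)) ∧
      ∫⁻ x, ENNReal.ofReal ((ν.rnDeriv volume x).toReal *
        logPlus (ν.rnDeriv volume x).toReal) < ⊤) :=
  minimizer_density_in_LlogL_general n₁ n₂ Ω₁ Ω₂ hΩ₁ hΩ₂ c γ hγ μ ν pibar hpibarprob hpibarsupp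
    hpibarm₁ hpibarm₂ hfin
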